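/- arXiv:2008.11981 — 5 statements merged into one kernel-verified Lean document; each statement's English description precedes it below -/
import Mathlib

section
/- Let u_L, u_R be real numbers, f : ℝ → ℝ^d a continuously differentiable flux, n a unit vector, and λ ≥ max over ω ∈ [0,1] of |f'(ωu_R + (1-ω)u_L)·n|, with λ > 0. Then the bar state ū = (u_L + u_R)/2 - (n·(f(u_R) - f(u_L)))/(2λ) satisfies min(u_L,u_R) ≤ ū ≤ max(u_L,u_R). -/
/-!
The mean value theorem for the scalar function `ω ↦ ⟪f (ω * uR + (1 - ω) * uL), n⟫` on `[0, 1]`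
gives `|⟪f uR - f uL, n⟫| ≤ λ |uR - uL|`. Hence the bar state differs from the midpoint
`(uL + uR) / 2` by at most `|uR - uL| / 2`, which keeps it between `uL` and `uR`.
-/

open scoped RealInnerProductSpace

open Set

section InnerProduct

variable {E : Type*} [NormedAddCommGroup E] [InnerProductSpace ℝ E]

theorem HasDerivAt.inner_const {f : ℝ → E} {f' : E} {x : ℝ} (hf : HasDerivAt f f' x) (n : E) :
    HasDerivAt (fun t => ⟪f t, n⟫) ⟪f', n⟫ x := by
  simpa using hf.inner ℝ (hasDerivAt_const x n)

theorem abs_inner_sub_le_of_abs_inner_deriv_le {f : ℝ → E} (hf : Differentiable ℝ f)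
    (n : E) (a b lam : ℝ)
    (hbound : ∀ ω ∈ Icc (0 : ℝ) 1, |⟪deriv f (ω * b + (1 - ω) * a), n⟫| ≤ lam) :
    |⟪f b - f a, n⟫| ≤ lam * |b - a| := by
  have hpath (ω : ℝ) : HasDerivAt (fun ω : ℝ => ω * b + (1 - ω) * a) (b - a) ω := by
    have h := ((hasDerivAt_id' ω).mul_const b).add (((hasDerivAt_id' ω).const_sub 1).mul_const a)
    simp only [one_mul, neg_one_mul, ← sub_eq_add_neg] at h
    exact h
  have hderiv (ω : ℝ) : HasDerivAt (fun ω => ⟪f (ω * b + (1 - ω) * a), n⟫)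
      ((b - a) * ⟪deriv f (ω * b + (1 - ω) * a), n⟫) ω := by
    simpa [real_inner_smul_left] using
      (((hf _).hasDerivAt.scomp ω (hpath ω)).inner_const n)
  have := norm_image_sub_le_of_norm_deriv_le_segment_01' (C := lam * |b - a|)
    (fun ω _ => (hderiv ω).hasDerivWithinAt)
    (fun ω hω => by
      rw [Real.norm_eq_abs, abs_mul, mul_comm]
      exact mul_le_mul_of_nonneg_right (hbound ω (Ico_subset_Icc_self hω)) (abs_nonneg _))
  simpa [inner_sub_left] using this

end InnerProduct

theorem add_div_two_sub_div_mem_uIcc {a b c lam : ℝ} (hlam : 0 < lam)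
    (hc : |c| ≤ lam * |b - a|) : (a + b) / 2 - c / (2 * lam) ∈ uIcc a b := by
  have hshift : |c / (2 * lam)| ≤ |b - a| / 2 := by
    rw [abs_div, abs_of_pos (by positivity : (0 : ℝ) < 2 * lam),
      div_le_div_iff₀ (by positivity) two_pos]
    nlinarith
  obtain ⟨hlow, hhigh⟩ := abs_le.mp hshift
  have hsum := min_add_max a b
  have hdiff := max_sub_min_eq_abs a b
  constructor <;> linarith

theorem bar_state_bounds_general (d : ℕ) (uL uR : ℝ)
    (f : ℝ → EuclideanSpace ℝ (Fin d)) (hf : ContDiff ℝ 1 f)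
    (n : EuclideanSpace ℝ (Fin d))
    (lam : ℝ) (hlam : 0 < lam)
    (hbound : ∀ ω ∈ Set.Icc (0:ℝ) 1,
      |(⟪deriv f (ω * uR + (1 - ω) * uL), n⟫ : ℝ)| ≤ lam) :
    min uL uR ≤ (uL + uR) / 2 - ⟪f uR - f uL, n⟫ / (2 * lam) ∧
      (uL + uR) / 2 - ⟪f uR - f uL, n⟫ / (2 * lam) ≤ max uL uR :=
  add_div_two_sub_div_mem_uIcc hlam <|
    abs_inner_sub_le_of_abs_inner_deriv_le (hf.differentiable one_ne_zero) n uL uR lam hbound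

/-- Bar-state bounds for the local Lax–Friedrichs flux. -/
theorem bar_state_bounds (d : ℕ) (uL uR : ℝ)
    (f : ℝ → EuclideanSpace ℝ (Fin d)) (hf : ContDiff ℝ 1 f)
    (n : EuclideanSpace ℝ (Fin d)) (hn : ‖n‖ = 1)
    (lam : ℝ) (hlam : 0 < lam)
    (hbound : ∀ ω ∈ Set.Icc (0:ℝ) 1,
      |(⟪deriv f (ω * uR + (1 - ω) * uL), n⟫ : ℝ)| ≤ lam) :
    min uL uR ≤ (uL + uR) / 2 - ⟪f uR - f uL, n⟫ / (2 * lam) ∧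
      (uL + uR) / 2 - ⟪f uR - f uL, n⟫ / (2 * lam) ≤ max uL uR :=
  bar_state_bounds_general d uL uR f hf n lam hlam hbound
end

section
/- Under the hypotheses: for each j ∈ N, λ_j > 0, s_j > 0, ū_j ∈ [U_min, U_max] with U_i ∈ [U_min, U_max], F*_j ∈ ℝ satisfies λ_j s_j (U_min − ū_j) ≤ F*_j ≤ λ_j s_j (U_max − ū_j), and the CFL condition (Δt/V) Σ_j s_j λ_j ≤ 1 holds. Then U* := U_i + (Δt/V) Σ_j (s_j λ_j (ū_j − U_i) + F*_j) lies in [U_min, U_max]. -/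
/-- DMP property of monolithic convex limiting: if each limited antidiffusive flux
satisfies the MCL bounds relative to the bar states, the flux-corrected update stays
in the local bounds under the CFL condition. -/
theorem mcl_update_bounds {ι : Type*} (N : Finset ι)
    (lam s ubar F : ι → ℝ) (Ui Umin Umax Δt V : ℝ)
    (hlam : ∀ j ∈ N, 0 < lam j) (hs : ∀ j ∈ N, 0 < s j)
    (hΔt : 0 < Δt) (hV : 0 < V)
    (hUi : Umin ≤ Ui ∧ Ui ≤ Umax)
    (hbar : ∀ j ∈ N, Umin ≤ ubar j ∧ ubar j ≤ Umax)
    (hF : ∀ j ∈ N, lam j * s j * (Umin - ubar j) ≤ F j ∧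
      F j ≤ lam j * s j * (Umax - ubar j))
    (hcfl : Δt / V * ∑ j ∈ N, s j * lam j ≤ 1) :
    Umin ≤ Ui + Δt / V * ∑ j ∈ N, (s j * lam j * (ubar j - Ui) + F j) ∧
      Ui + Δt / V * ∑ j ∈ N, (s j * lam j * (ubar j - Ui) + F j) ≤ Umax := by
  have hc : 0 ≤ Δt / V := le_of_lt (div_pos hΔt hV)
  have hlo : ∑ j ∈ N, s j * lam j * (Umin - Ui) ≤
      ∑ j ∈ N, (s j * lam j * (ubar j - Ui) + F j) := by
    apply Finset.sum_le_sum
    intro j hj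
    have := (hF j hj).1
    nlinarith [this]
  have hhi : ∑ j ∈ N, (s j * lam j * (ubar j - Ui) + F j) ≤
      ∑ j ∈ N, s j * lam j * (Umax - Ui) := by
    apply Finset.sum_le_sum
    intro j hj
    have := (hF j hj).2
    nlinarith [this]
  have hSlo : ∑ j ∈ N, s j * lam j * (Umin - Ui) =
      (∑ j ∈ N, s j * lam j) * (Umin - Ui) := by
    rw [Finset.sum_mul]
  have hShi : ∑ j ∈ N, s j * lam j * (Umax - Ui) =
      (∑ j ∈ N, s j * lam j) * (Umax - Ui) := by
    rw [Finset.sum_mul]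
  have hSnn : 0 ≤ ∑ j ∈ N, s j * lam j :=
    Finset.sum_nonneg fun j hj => le_of_lt (mul_pos (hs j hj) (hlam j hj))
  constructor
  · have h1 : Δt / V * ((∑ j ∈ N, s j * lam j) * (Umin - Ui)) ≤
        Δt / V * ∑ j ∈ N, (s j * lam j * (ubar j - Ui) + F j) := by
      rw [← hSlo]; exact mul_le_mul_of_nonneg_left hlo hc
    nlinarith [hUi.1, mul_nonneg hc hSnn]
  · have h1 : Δt / V * ∑ j ∈ N, (s j * lam j * (ubar j - Ui) + F j) ≤
        Δt / V * ((∑ j ∈ N, s j * lam j) * (Umax - Ui)) := by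
      rw [← hShi]; exact mul_le_mul_of_nonneg_left hhi hc
    nlinarith [hUi.2, mul_nonneg hc hSnn]
end

section
/- Let F_ij ∈ ℝ with F_min^{MCL} := λ s min(0, max(U_i^{min} − ū_ij, ū_ji − U_j^{max})) and F_max^{MCL} := λ s max(0, min(U_i^{max} − ū_ij, ū_ji − U_j^{min})) for λ, s > 0. If α ∈ [0,1] is defined by the Zalesak formula α = min(1, F_max^{MCL}/F_ij) for F_ij > 0, α = 1 for F_ij = 0, α = min(1, F_min^{MCL}/F_ij) for F_ij < 0, then the corrected bar states ū*_ij = ū_ij + αF_ij/(λs) and ū*_ji = ū_ji − αF_ij/(λs) satisfy ū*_ij ∈ [min(U_i^{min}, ū_ij), max(U_i^{max}, ū_ij)] and ū*_ji ∈ [min(U_j^{min}, ū_ji), max(U_j^{max}, ū_ji)]. -/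
/-- The MCL bounding fluxes together with the Zalesak formula keep both corrected
bar states within the respective local bounds (extended to include the unlimited
bar state if it already violates them). -/
theorem mcl_bar_state_correction (Fij lam s uij uji Uimin Uimax Ujmin Ujmax : ℝ)
    (hlam : 0 < lam) (hs : 0 < s)
    (hUi : Uimin ≤ Uimax) (hUj : Ujmin ≤ Ujmax) :
    let Fmin : ℝ := lam * s * min 0 (max (Uimin - uij) (uji - Ujmax))
    let Fmax : ℝ := lam * s * max 0 (min (Uimax - uij) (uji - Ujmin))
    let α : ℝ := if 0 < Fij then min 1 (Fmax / Fij)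
      else if Fij = 0 then 1 else min 1 (Fmin / Fij)
    (uij + α * Fij / (lam * s) ∈ Set.Icc (min Uimin uij) (max Uimax uij)) ∧
      (uji - α * Fij / (lam * s) ∈ Set.Icc (min Ujmin uji) (max Ujmax uji)) := by
  intro Fmin Fmax α
  set M1 : ℝ := max (Uimin - uij) (uji - Ujmax) with hM1def
  set M2 : ℝ := min (Uimax - uij) (uji - Ujmin) with hM2def
  have hls : (0:ℝ) < lam * s := mul_pos hlam hs
  have hFmin : Fmin = lam * s * min 0 M1 := rfl
  have hFmax : Fmax = lam * s * max 0 M2 := rfl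
  have hM1le : min 0 M1 ≤ 0 := min_le_left _ _
  have hM2ge : (0:ℝ) ≤ max 0 M2 := le_max_left _ _
  have hFminle : Fmin ≤ 0 := by
    rw [hFmin]; exact mul_nonpos_of_nonneg_of_nonpos hls.le hM1le
  have hFmaxge : (0:ℝ) ≤ Fmax := by
    rw [hFmax]; exact mul_nonneg hls.le hM2ge
  have key : Fmin ≤ α * Fij ∧ α * Fij ≤ Fmax := by
    rcases lt_trichotomy Fij 0 with hF | hF | hF
    · have hα : α = min 1 (Fmin / Fij) := by
        simp only [α, if_neg (not_lt.mpr hF.le), if_neg hF.ne]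
      have hαnn : 0 ≤ α := by
        rw [hα]
        exact le_min zero_le_one (div_nonneg_of_nonpos hFminle hF.le)
      constructor
      · rcases le_total (Fmin / Fij) 1 with h | h
        · rw [hα, min_eq_right h, div_mul_cancel₀ _ hF.ne]
        · rw [hα, min_eq_left h, one_mul]
          have := (le_div_iff_of_neg hF).mp h
          linarith
      · exact le_trans (mul_nonpos_of_nonneg_of_nonpos hαnn hF.le) hFmaxge
    · subst hF; simp [hFminle, hFmaxge]
    · have hα : α = min 1 (Fmax / Fij) := by simp only [α, if_pos hF]
      have hαnn : 0 ≤ α := by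
        rw [hα]
        exact le_min zero_le_one (div_nonneg hFmaxge hF.le)
      constructor
      · exact le_trans hFminle (mul_nonneg hαnn hF.le)
      · rcases le_total (Fmax / Fij) 1 with h | h
        · rw [hα, min_eq_right h, div_mul_cancel₀ _ hF.ne']
        · rw [hα, min_eq_left h, one_mul]
          exact (one_le_div hF).mp h
  have hd1 : min 0 M1 ≤ α * Fij / (lam * s) := by
    rw [le_div_iff₀ hls]
    calc min 0 M1 * (lam * s) = lam * s * min 0 M1 := by ring
    _ = Fmin := hFmin.symm
    _ ≤ α * Fij := key.1
  have hd2 : α * Fij / (lam * s) ≤ max 0 M2 := by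
    rw [div_le_iff₀ hls]
    calc α * Fij ≤ Fmax := key.2
    _ = lam * s * max 0 M2 := hFmax
    _ = max 0 M2 * (lam * s) := by ring
  have hM1a : Uimin - uij ≤ M1 := le_max_left _ _
  have hM1b : uji - Ujmax ≤ M1 := le_max_right _ _
  have hM2a : M2 ≤ Uimax - uij := min_le_left _ _
  have hM2b : M2 ≤ uji - Ujmin := min_le_right _ _
  have h1 : min Uimin uij ≤ uij + min 0 M1 := by
    rcases min_cases (0:ℝ) M1 with ⟨h, _⟩ | ⟨h, _⟩ <;> rw [h] <;>
      [linarith [min_le_right Uimin uij]; linarith [min_le_left Uimin uij]]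
  have h2 : uij + max 0 M2 ≤ max Uimax uij := by
    rcases max_cases (0:ℝ) M2 with ⟨h, _⟩ | ⟨h, _⟩ <;> rw [h] <;>
      [linarith [le_max_right Uimax uij]; linarith [le_max_left Uimax uij]]
  have h3 : min Ujmin uji ≤ uji - max 0 M2 := by
    rcases max_cases (0:ℝ) M2 with ⟨h, _⟩ | ⟨h, _⟩ <;> rw [h] <;>
      [linarith [min_le_right Ujmin uji]; linarith [min_le_left Ujmin uji]]
  have h4 : uji - min 0 M1 ≤ max Ujmax uji := by
    rcases min_cases (0:ℝ) M1 with ⟨h, _⟩ | ⟨h, _⟩ <;> rw [h] <;>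
      [linarith [le_max_right Ujmax uji]; linarith [le_max_left Ujmax uji]]
  exact ⟨⟨by linarith, by linarith⟩, ⟨by linarith, by linarith⟩⟩
end

section
/- Let f : ℝ → ℝ^d be continuously differentiable, n a unit vector, U_i, U_j, u_i, u_j ∈ ℝ, β_i, β_j ∈ [0,1], and let λ ≥ |n·f'(ξ)| for all ξ in the convex hull of {U_i, U_j, u_i, u_j}. Define G(β_i, β_j) = n·(f(U_j) − f(U_j + β_j(u_j − U_j)))/2 + n·(f(U_i) − f(U_i + β_i(u_i − U_i)))/2 − (λ/2)(β_j(U_j − u_j) − β_i(U_i − u_i)). Then λ(min(0, U_i − u_i) − max(0, U_j − u_j)) ≤ G(β_i, β_j) ≤ λ(max(0, U_i − u_i) − min(0, U_j − u_j)). -/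
/-!
By the mean value theorem applied to `ξ ↦ ⟪f ξ, n⟫` on the convex hull, each flux increment
`⟪f U - f (U + β (u - U)), n⟫` is at most `λ β |U - u|` in absolute value. Adding the linearized
term `± (λ/2) β (U - u)` then leaves each half of `G` between `λ β min(0, U - u)` and
`λ β max(0, U - u)`, and `β ≤ 1` widens this to the `β`-free bounds.
-/

open scoped RealInnerProductSpace

open Set

theorem abs_inner_sub_le_of_abs_inner_deriv_le_s8 {E : Type*} [NormedAddCommGroup E]
    [InnerProductSpace ℝ E] {f : ℝ → E} {s : Set ℝ} (hs : Convex ℝ s)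
    (hf : ∀ x ∈ s, DifferentiableAt ℝ f x) (v : E) {lam : ℝ}
    (hlam : ∀ ξ ∈ s, |⟪deriv f ξ, v⟫| ≤ lam) {a b : ℝ} (ha : a ∈ s) (hb : b ∈ s) :
    |⟪f a - f b, v⟫| ≤ lam * |a - b| := by
  have hderiv : ∀ x ∈ s, HasDerivAt (fun y ↦ ⟪f y, v⟫) ⟪deriv f x, v⟫ x := fun x hx ↦ by
    simpa using (hf x hx).hasDerivAt.inner ℝ (hasDerivAt_const x v)
  simpa [inner_sub_left] using hs.norm_image_sub_le_of_norm_hasDerivWithin_le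
    (fun x hx ↦ (hderiv x hx).hasDerivWithinAt) hlam hb ha

theorem abs_inner_sub_add_smul_sub_le {E : Type*} [NormedAddCommGroup E]
    [InnerProductSpace ℝ E] {f : ℝ → E} {s : Set ℝ} (hs : Convex ℝ s)
    (hf : ∀ x ∈ s, DifferentiableAt ℝ f x) (v : E) {lam : ℝ}
    (hlam : ∀ ξ ∈ s, |⟪deriv f ξ, v⟫| ≤ lam) {U u β : ℝ} (hU : U ∈ s) (hu : u ∈ s)
    (hβ : β ∈ Icc (0 : ℝ) 1) :
    |⟪f U - f (U + β * (u - U)), v⟫| ≤ lam * (β * |U - u|) := by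
  have hmem : U + β * (u - U) ∈ s := hs.add_smul_sub_mem hU hu hβ
  have hdist : |U - (U + β * (u - U))| = β * |U - u| := by
    rw [show U - (U + β * (u - U)) = β * (U - u) by ring, abs_mul, abs_of_nonneg hβ.1]
  rw [← hdist]
  exact abs_inner_sub_le_of_abs_inner_deriv_le_s8 hs hf v hlam hU hmem

theorem half_add_mem_Icc_min_max {A β δ lam : ℝ} (hβ : β ∈ Icc (0 : ℝ) 1) (hlam : 0 ≤ lam)
    (hA : |A| ≤ lam * (β * |δ|)) :
    A / 2 + lam / 2 * (β * δ) ∈ Icc (lam * min 0 δ) (lam * max 0 δ) := by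
  obtain ⟨hA_lower, hA_upper⟩ := abs_le.mp hA
  have hmin : lam * min 0 δ ≤ lam * (β * min 0 δ) :=
    mul_le_mul_of_nonneg_left (le_mul_of_le_one_left (min_le_left 0 δ) hβ.2) hlam
  have hmax : lam * (β * max 0 δ) ≤ lam * max 0 δ :=
    mul_le_mul_of_nonneg_left (mul_le_of_le_one_left (le_max_left 0 δ) hβ.2) hlam
  rcases le_total 0 δ with hδ | hδ
  · rw [abs_of_nonneg hδ] at hA_lower hA_upper
    rw [min_eq_left hδ, max_eq_right hδ] at *
    constructor <;> linarith
  · rw [abs_of_nonpos hδ] at hA_lower hA_upper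
    rw [min_eq_right hδ, max_eq_left hδ] at *
    constructor <;> linarith

theorem nonlinear_flux_sandwich_general (d : ℕ)
    (f : ℝ → EuclideanSpace ℝ (Fin d)) (hf : ContDiff ℝ 1 f)
    (n : EuclideanSpace ℝ (Fin d))
    (Ui Uj ui uj βi βj lam : ℝ)
    (hβi : βi ∈ Set.Icc (0:ℝ) 1) (hβj : βj ∈ Set.Icc (0:ℝ) 1)
    (hlam : ∀ ξ ∈ convexHull ℝ ({Ui, Uj, ui, uj} : Set ℝ),
      |(⟪deriv f ξ, n⟫ : ℝ)| ≤ lam) :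
    lam * (min 0 (Ui - ui) - max 0 (Uj - uj)) ≤
        ⟪f Uj - f (Uj + βj * (uj - Uj)), n⟫ / 2
          + ⟪f Ui - f (Ui + βi * (ui - Ui)), n⟫ / 2
          - lam / 2 * (βj * (Uj - uj) - βi * (Ui - ui)) ∧
      ⟪f Uj - f (Uj + βj * (uj - Uj)), n⟫ / 2
          + ⟪f Ui - f (Ui + βi * (ui - Ui)), n⟫ / 2
          - lam / 2 * (βj * (Uj - uj) - βi * (Ui - ui)) ≤
        lam * (max 0 (Ui - ui) - min 0 (Uj - uj)) := by
  have hconv := convex_convexHull ℝ ({Ui, Uj, ui, uj} : Set ℝ)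
  have hmem : ∀ x ∈ ({Ui, Uj, ui, uj} : Set ℝ), x ∈ convexHull ℝ {Ui, Uj, ui, uj} :=
    fun x hx ↦ subset_convexHull ℝ _ hx
  have hdiff : ∀ x ∈ convexHull ℝ {Ui, Uj, ui, uj}, DifferentiableAt ℝ f x :=
    fun x _ ↦ hf.differentiable one_ne_zero x
  have hlam0 : 0 ≤ lam := (abs_nonneg _).trans (hlam Ui (hmem Ui (by simp)))
  have hi := half_add_mem_Icc_min_max hβi hlam0 <|
    abs_inner_sub_add_smul_sub_le hconv hdiff n hlam (hmem Ui (by simp)) (hmem ui (by simp)) hβi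
  -- the `j`-increment enters `G` with the opposite sign, so it is fed in negated
  have hj := half_add_mem_Icc_min_max hβj hlam0 <| (abs_neg _).trans_le <|
    abs_inner_sub_add_smul_sub_le hconv hdiff n hlam (hmem Uj (by simp)) (hmem uj (by simp)) hβj
  constructor <;> linarith [hi.1, hi.2, hj.1, hj.2]

/-- Linearized sandwich estimate for the slope-limited LLF antidiffusive flux
of a nonlinear conservation law. -/
theorem nonlinear_flux_sandwich (d : ℕ)
    (f : ℝ → EuclideanSpace ℝ (Fin d)) (hf : ContDiff ℝ 1 f)
    (n : EuclideanSpace ℝ (Fin d)) (hn : ‖n‖ = 1)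
    (Ui Uj ui uj βi βj lam : ℝ)
    (hβi : βi ∈ Set.Icc (0:ℝ) 1) (hβj : βj ∈ Set.Icc (0:ℝ) 1)
    (hlam : ∀ ξ ∈ convexHull ℝ ({Ui, Uj, ui, uj} : Set ℝ),
      |(⟪deriv f ξ, n⟫ : ℝ)| ≤ lam) :
    lam * (min 0 (Ui - ui) - max 0 (Uj - uj)) ≤
        ⟪f Uj - f (Uj + βj * (uj - Uj)), n⟫ / 2
          + ⟪f Ui - f (Ui + βi * (ui - Ui)), n⟫ / 2
          - lam / 2 * (βj * (Uj - uj) - βi * (Ui - ui)) ∧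
      ⟪f Uj - f (Uj + βj * (uj - Uj)), n⟫ / 2
          + ⟪f Ui - f (Ui + βi * (ui - Ui)), n⟫ / 2
          - lam / 2 * (βj * (Uj - uj) - βi * (Ui - ui)) ≤
        lam * (max 0 (Ui - ui) - min 0 (Uj - uj)) :=
  nonlinear_flux_sandwich_general d f hf n Ui Uj ui uj βi βj lam hβi hβj hlam
end

section
/- Let η : ℝ → ℝ be convex and differentiable, f : ℝ → ℝ^d continuously differentiable, q : ℝ → ℝ^d satisfy q'(u) = η'(u)f'(u), and define ψ(u) = η'(u)f(u) − q(u). For U_i, U_j ∈ ℝ and unit vector n, with λ ≥ |n·f'(ξ)| for all ξ between U_i and U_j and λ > 0, the low-order LLF flux H^{P0} = n·(f(U_i)+f(U_j))/2 − (λ/2)(U_j − U_i) satisfies the entropy stability condition (η'(U_j) − η'(U_i))·H^{P0} ≤ n·(ψ(U_j) − ψ(U_i)). -/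
open scoped RealInnerProductSpace

open Set

/-! With `g = ⟪f, n⟫` and `G = ⟪q, n⟫`, so that `G' = η' g'`, the claim says that
`Φ(t) = (η'(U_i) + η'(U_j))/2 · g(t) − G(t) + λ/2 · (η'(U_j) − η'(U_i)) · t`
increases from `U_i` to `U_j`. Between the two points `η'` is monotone, so it lies between
its endpoint values, and `|g'| ≤ λ` then makes `Φ'` of the same sign as `U_j − U_i`. -/

lemma midpoint_sub_mul_add_nonneg {a b x g lam : ℝ} (hax : a ≤ x) (hxb : x ≤ b)
    (hg : |g| ≤ lam) : 0 ≤ ((a + b) / 2 - x) * g + lam / 2 * (b - a) := by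
  obtain ⟨hg_lower, hg_upper⟩ := abs_le.1 hg
  -- the left side is `((x - a) (lam - g) + (b - x) (lam + g)) / 2`
  nlinarith [mul_nonneg (sub_nonneg.2 hax) (sub_nonneg.2 hg_upper),
    mul_nonneg (sub_nonneg.2 hxb) (neg_le_iff_add_nonneg.1 hg_lower)]

lemma llf_dissipation_bound_of_le {m g g' G : ℝ → ℝ} {lam u v : ℝ} (huv : u ≤ v)
    (hm : MonotoneOn m (Icc u v)) (hg : ∀ s ∈ Icc u v, HasDerivAt g (g' s) s)
    (hG : ∀ s ∈ Icc u v, HasDerivAt G (m s * g' s) s) (hlam : ∀ s ∈ Icc u v, |g' s| ≤ lam) :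
    -(lam / 2 * (m v - m u) * (v - u)) ≤ (m u + m v) / 2 * (g v - g u) - (G v - G u) := by
  set Φ : ℝ → ℝ := fun t => (m u + m v) / 2 * g t - G t + lam / 2 * (m v - m u) * t
  have hΦ : ∀ s ∈ Icc u v,
      HasDerivAt Φ (((m u + m v) / 2 - m s) * g' s + lam / 2 * (m v - m u)) s := by
    intro s hs
    exact ((((hg s hs).const_mul _).sub (hG s hs)).add
      ((hasDerivAt_id s).const_mul _)).congr_deriv (by ring)
  have hΦ_mono : MonotoneOn Φ (Icc u v) := by
    refine monotoneOn_of_hasDerivWithinAt_nonneg (convex_Icc u v)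
      (fun s hs => (hΦ s hs).continuousAt.continuousWithinAt)
      (fun s hs => (hΦ s (interior_subset hs)).hasDerivWithinAt) fun s hs => ?_
    have hs' := interior_subset hs
    exact midpoint_sub_mul_add_nonneg (hm (left_mem_Icc.2 huv) hs' hs'.1)
      (hm hs' (right_mem_Icc.2 huv) hs'.2) (hlam s hs')
  have hΦ_uv := hΦ_mono (left_mem_Icc.2 huv) (right_mem_Icc.2 huv) huv
  simp only [Φ] at hΦ_uv
  linarith

lemma llf_dissipation_bound {m g g' G : ℝ → ℝ} {lam u v : ℝ}
    (hm : MonotoneOn m (uIcc u v)) (hg : ∀ s ∈ uIcc u v, HasDerivAt g (g' s) s)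
    (hG : ∀ s ∈ uIcc u v, HasDerivAt G (m s * g' s) s) (hlam : ∀ s ∈ uIcc u v, |g' s| ≤ lam) :
    -(lam / 2 * (m v - m u) * (v - u)) ≤ (m u + m v) / 2 * (g v - g u) - (G v - G u) := by
  rcases le_total u v with huv | hvu
  · rw [uIcc_of_le huv] at hm hg hG hlam
    exact llf_dissipation_bound_of_le huv hm hg hG hlam
  · rw [uIcc_of_ge hvu] at hm hg hG hlam
    -- the claim is invariant under swapping `u, v` together with `g, G ↦ -g, -G`
    have hswap := llf_dissipation_bound_of_le (g := -g) (g' := -g') (G := -G) hvu hm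
      (fun s hs => (hg s hs).neg) (fun s hs => by simpa using (hG s hs).neg)
      (fun s hs => by simpa using hlam s hs)
    simp only [Pi.neg_apply] at hswap
    linarith

theorem llf_entropy_stability_general (d : ℕ)
    (η : ℝ → ℝ) (hηc : ConvexOn ℝ Set.univ η) (hηd : Differentiable ℝ η)
    (f q : ℝ → EuclideanSpace ℝ (Fin d))
    (hf : ContDiff ℝ 1 f) (hq : Differentiable ℝ q)
    (hpair : ∀ u : ℝ, deriv q u = deriv η u • deriv f u)
    (n : EuclideanSpace ℝ (Fin d))
    (Ui Uj lam : ℝ)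
    (hlam : ∀ ξ ∈ Set.uIcc Ui Uj, |(⟪deriv f ξ, n⟫ : ℝ)| ≤ lam) :
    (deriv η Uj - deriv η Ui) *
        (⟪f Ui + f Uj, n⟫ / 2 - lam / 2 * (Uj - Ui)) ≤
      ⟪(deriv η Uj • f Uj - q Uj) - (deriv η Ui • f Ui - q Ui), n⟫ := by
  have hη_mono : MonotoneOn (deriv η) (uIcc Ui Uj) :=
    (hηc.monotoneOn_deriv fun x _ => hηd x).mono (subset_univ _)
  have hg : ∀ s, HasDerivAt (fun u => ⟪f u, n⟫) ⟪deriv f s, n⟫ s := fun s => by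
    simpa using ((hf.differentiable one_ne_zero s).hasDerivAt.inner ℝ (hasDerivAt_const s n))
  have hG : ∀ s, HasDerivAt (fun u => ⟪q u, n⟫) (deriv η s * ⟪deriv f s, n⟫) s := fun s => by
    simpa [hpair s, real_inner_smul_left] using
      (hq s).hasDerivAt.inner ℝ (hasDerivAt_const s n)
  have hbound := llf_dissipation_bound hη_mono (fun s _ => hg s) (fun s _ => hG s) hlam
  simp only [inner_sub_left, inner_add_left, real_inner_smul_left]
  linarith

/-- Chen–Shu entropy stability of the low-order local Lax–Friedrichs flux for a
scalar conservation law with entropy pair `(η, q)` and entropy potential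
`ψ(u) = η'(u) f(u) − q(u)`. -/
theorem llf_entropy_stability (d : ℕ)
    (η : ℝ → ℝ) (hηc : ConvexOn ℝ Set.univ η) (hηd : Differentiable ℝ η)
    (f q : ℝ → EuclideanSpace ℝ (Fin d))
    (hf : ContDiff ℝ 1 f) (hq : Differentiable ℝ q)
    (hpair : ∀ u : ℝ, deriv q u = deriv η u • deriv f u)
    (n : EuclideanSpace ℝ (Fin d)) (hn : ‖n‖ = 1)
    (Ui Uj lam : ℝ) (hlam0 : 0 < lam)
    (hlam : ∀ ξ ∈ Set.uIcc Ui Uj, |(⟪deriv f ξ, n⟫ : ℝ)| ≤ lam) :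
    (deriv η Uj - deriv η Ui) *
        (⟪f Ui + f Uj, n⟫ / 2 - lam / 2 * (Uj - Ui)) ≤
      ⟪(deriv η Uj • f Uj - q Uj) - (deriv η Ui • f Ui - q Ui), n⟫ :=
  llf_entropy_stability_general d η hηc hηd f q hf hq hpair n Ui Uj lam hlam
end
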